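/- If u : 𝔻 → ℝ is a bounded C² function whose Laplacian satisfies ∇²u(z) ≥ c/(1-|z|²)² for all z ∈ 𝔻 with constant c > 0, then no such u exists. -/

import Mathlib

/-!
For `k > 0` the function `v = u + k log (1 - |z|²)` tends to `-∞` at the boundary circle because
`u` is bounded, so it attains a maximum at some `z₀ ∈ 𝔻`, where `Δv(z₀) ≤ 0`. But
`Δ log (1 - |z|²) = -4 / (1 - |z|²)²`, so for `k = c/8` the hypothesis gives
`Δv(z₀) ≥ c / (2 (1 - |z₀|²)²) > 0`.
-/

open Complex Metric

/-- The Laplacian `∂²/∂x² + ∂²/∂y²` of a real-valued function on `ℂ ≅ ℝ²`. -/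
noncomputable def laplacian (f : ℂ → ℝ) (z : ℂ) : ℝ :=
  iteratedFDeriv ℝ 2 f z ![1, 1] + iteratedFDeriv ℝ 2 f z ![Complex.I, Complex.I]

open Filter Topology InnerProductSpace
open scoped Laplacian

theorem IsLocalMax.deriv_deriv_nonpos {f : ℝ → ℝ} {a : ℝ} (h : IsLocalMax f a)
    (hc : ContinuousAt f a) : deriv (deriv f) a ≤ 0 := by
  by_contra! hpos
  have hmin := isLocalMin_of_deriv_deriv_pos hpos h.deriv_eq_zero hc
  have hconst : f =ᶠ[𝓝 a] fun _ => f a :=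
    (hmin.and h).mono fun x hx => le_antisymm hx.2 hx.1
  have hderiv : deriv f =ᶠ[𝓝 a] fun _ => 0 :=
    hconst.eventuallyEq_nhds.mono fun x hx => by rw [hx.deriv_eq, deriv_const]
  simp [hderiv.deriv_eq] at hpos

section SecondDirectionalDerivative

variable {E F : Type*} [NormedAddCommGroup E] [NormedSpace ℝ E]
  [NormedAddCommGroup F] [NormedSpace ℝ F] {x : E}

theorem ContDiffAt.deriv_deriv_comp_add_smul {f : E → F} (hf : ContDiffAt ℝ 2 f x) (v : E) :
    deriv (deriv fun t : ℝ => f (x + t • v)) 0 = fderiv ℝ (fderiv ℝ f) x v v := by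
  have hline : ∀ t : ℝ, HasDerivAt (fun s : ℝ => x + s • v) v t := fun t => by
    simpa using ((hasDerivAt_id t).smul_const v).const_add x
  have hnear : ∀ᶠ t in 𝓝 (0 : ℝ), DifferentiableAt ℝ f (x + t • v) := by
    have : Tendsto (fun t : ℝ => x + t • v) (𝓝 0) (𝓝 x) :=
      Continuous.tendsto' (by fun_prop) 0 x (by simp)
    exact this.eventually ((hf.eventually (by simp)).mono fun y hy =>
      hy.differentiableAt (by norm_num))
  have hfirst : deriv (fun t : ℝ => f (x + t • v)) =ᶠ[𝓝 0]
      fun t => fderiv ℝ f (x + t • v) v :=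
    hnear.mono fun t ht => (ht.hasFDerivAt.comp_hasDerivAt t (hline t)).deriv
  have hd : DifferentiableAt ℝ (fderiv ℝ f) x :=
    (hf.fderiv_right (m := 1) (by norm_num)).differentiableAt (by simp)
  have hF : HasFDerivAt (fderiv ℝ f) (fderiv ℝ (fderiv ℝ f) x) (x + (0 : ℝ) • v) := by
    simpa using hd.hasFDerivAt
  have hsecond : HasDerivAt (fun t : ℝ => fderiv ℝ f (x + t • v) v)
      (fderiv ℝ (fderiv ℝ f) x v v) 0 := by
    have hcomp : HasDerivAt (fun t : ℝ => fderiv ℝ f (x + t • v))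
        (fderiv ℝ (fderiv ℝ f) x v) 0 := hF.comp_hasDerivAt 0 (hline 0)
    simpa using hcomp.clm_apply (hasDerivAt_const (0 : ℝ) v)
  rw [hfirst.deriv_eq, hsecond.deriv]

theorem IsLocalMax.fderiv_fderiv_apply_self_nonpos {f : E → ℝ} (h : IsLocalMax f x)
    (hf : ContDiffAt ℝ 2 f x) (v : E) : fderiv ℝ (fderiv ℝ f) x v v ≤ 0 := by
  have hline : Tendsto (fun t : ℝ => x + t • v) (𝓝 0) (𝓝 x) :=
    Continuous.tendsto' (by fun_prop) 0 x (by simp)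
  have hmax : IsLocalMax (fun t : ℝ => f (x + t • v)) 0 := by
    filter_upwards [hline.eventually h] with t ht
    simpa using ht
  rw [← hf.deriv_deriv_comp_add_smul]
  exact hmax.deriv_deriv_nonpos (hf.continuousAt.comp_of_eq (by fun_prop) (by simp))

end SecondDirectionalDerivative

theorem IsLocalMax.laplacian_nonpos {E : Type*} [NormedAddCommGroup E] [InnerProductSpace ℝ E]
    [FiniteDimensional ℝ E] {f : E → ℝ} {x : E} (h : IsLocalMax f x) (hf : ContDiffAt ℝ 2 f x) :
    Δ f x ≤ 0 := by
  rw [laplacian_eq_iteratedFDeriv_stdOrthonormalBasis]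
  exact Finset.sum_nonpos fun i _ => by
    rw [iteratedFDeriv_two_apply]
    exact h.fderiv_fderiv_apply_self_nonpos hf _

theorem deriv_deriv_log_quadratic {h : ℝ} (hh : 0 < h) (a b : ℝ) :
    deriv (deriv fun t => Real.log (h - 2 * a * t - b * t ^ 2)) 0
      = -(2 * b * h + 4 * a ^ 2) / h ^ 2 := by
  have hq : ∀ t, HasDerivAt (fun t => h - 2 * a * t - b * t ^ 2) (-2 * a - 2 * b * t) t :=
    fun t => by
      refine ((((hasDerivAt_id t).const_mul (2 * a)).const_sub h).fun_sub
        (((hasDerivAt_id t).fun_pow 2).const_mul b)).congr_deriv ?_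
      simp
      ring
  have hpos : ∀ᶠ t in 𝓝 (0 : ℝ), 0 < h - 2 * a * t - b * t ^ 2 :=
    (hq 0).continuousAt.tendsto.eventually_const_lt (by simpa using hh)
  have hfirst : deriv (fun t => Real.log (h - 2 * a * t - b * t ^ 2)) =ᶠ[𝓝 0]
      fun t => (-2 * a - 2 * b * t) / (h - 2 * a * t - b * t ^ 2) :=
    hpos.mono fun t ht => ((hq t).log ht.ne').deriv
  have hlin : HasDerivAt (fun t : ℝ => -2 * a - 2 * b * t) (-2 * b) 0 := by
    simpa using ((hasDerivAt_id (0 : ℝ)).const_mul (2 * b)).const_sub (-2 * a)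
  rw [hfirst.deriv_eq, (hlin.fun_div (hq 0) (by simpa using hh.ne')).deriv]
  field_simp [hh.ne']
  ring

section LogOneSubNormSq

variable {E : Type*} [NormedAddCommGroup E] [InnerProductSpace ℝ E] {z : E}

theorem contDiffAt_log_one_sub_norm_sq (hz : ‖z‖ < 1) :
    ContDiffAt ℝ 2 (fun x : E => Real.log (1 - ‖x‖ ^ 2)) z := by
  have : 0 < 1 - ‖z‖ ^ 2 := by nlinarith [norm_nonneg z]
  exact (contDiffAt_const.sub (contDiff_norm_sq ℝ).contDiffAt).log this.ne'

theorem fderiv_fderiv_log_one_sub_norm_sq_apply_self (hz : ‖z‖ < 1) (v : E) :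
    fderiv ℝ (fderiv ℝ fun x : E => Real.log (1 - ‖x‖ ^ 2)) z v v
      = -(2 * ‖v‖ ^ 2 * (1 - ‖z‖ ^ 2) + 4 * ⟪z, v⟫_ℝ ^ 2) / (1 - ‖z‖ ^ 2) ^ 2 := by
  have hline : (fun t : ℝ => Real.log (1 - ‖z + t • v‖ ^ 2))
      = fun t => Real.log ((1 - ‖z‖ ^ 2) - 2 * ⟪z, v⟫_ℝ * t - ‖v‖ ^ 2 * t ^ 2) := by
    funext t
    rw [norm_add_sq_real, inner_smul_right, norm_smul, mul_pow, Real.norm_eq_abs, sq_abs]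
    ring_nf
  rw [← (contDiffAt_log_one_sub_norm_sq hz).deriv_deriv_comp_add_smul, hline,
    deriv_deriv_log_quadratic (by nlinarith [norm_nonneg z])]

theorem laplacian_log_one_sub_norm_sq [FiniteDimensional ℝ E] (hz : ‖z‖ < 1) :
    Δ (fun x : E => Real.log (1 - ‖x‖ ^ 2)) z
      = -(2 * Module.finrank ℝ E * (1 - ‖z‖ ^ 2) + 4 * ‖z‖ ^ 2) / (1 - ‖z‖ ^ 2) ^ 2 := by
  have hparseval : ∑ i, ⟪z, stdOrthonormalBasis ℝ E i⟫_ℝ ^ 2 = ‖z‖ ^ 2 := by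
    simpa only [Real.norm_eq_abs, sq_abs] using (stdOrthonormalBasis ℝ E).sum_sq_norm_inner_left z
  simp only [laplacian_eq_iteratedFDeriv_stdOrthonormalBasis, iteratedFDeriv_two_apply,
    Fin.isValue, Matrix.cons_val_zero, Matrix.cons_val_one, Matrix.cons_val_fin_one,
    fderiv_fderiv_log_one_sub_norm_sq_apply_self hz, OrthonormalBasis.norm_eq_one, one_pow,
    mul_one, neg_add_rev, ← Finset.sum_div, Finset.sum_add_distrib, Finset.sum_neg_distrib,
    ← Finset.mul_sum, hparseval, Finset.sum_const, Finset.card_univ, Fintype.card_fin,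
    nsmul_eq_mul]
  ring

end LogOneSubNormSq

theorem laplacian_log_one_sub_norm_sq_complex {z : ℂ} (hz : ‖z‖ < 1) :
    Δ (fun x : ℂ => Real.log (1 - ‖x‖ ^ 2)) z = -4 / (1 - ‖z‖ ^ 2) ^ 2 := by
  rw [laplacian_log_one_sub_norm_sq hz, Complex.finrank_real_complex]
  ring

theorem IsCompact.exists_isMaxOn_of_le_outside {α β : Type*} [TopologicalSpace α]
    [LinearOrder β] [TopologicalSpace β] [ClosedIciTopology β] {f : α → β} {s K : Set α}
    {x₀ : α} (hK : IsCompact K) (hx₀ : x₀ ∈ K) (hf : ContinuousOn f K)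
    (hout : ∀ x ∈ s \ K, f x ≤ f x₀) : ∃ z ∈ K, IsMaxOn f s z := by
  obtain ⟨z, hz, hmax⟩ := hK.exists_isMaxOn ⟨x₀, hx₀⟩ hf
  refine ⟨z, hz, fun x hx => ?_⟩
  by_cases hxK : x ∈ K
  · exact hmax hxK
  · exact (hout x ⟨hx, hxK⟩).trans (hmax hx₀)

theorem tendsto_log_one_sub_sq_nhdsLT_one :
    Tendsto (fun x : ℝ => Real.log (1 - x ^ 2)) (𝓝[<] 1) atBot := by
  refine Real.tendsto_log_nhdsGT_zero.comp (tendsto_nhdsWithin_iff.2 ⟨?_, ?_⟩)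
  · have : Tendsto (fun x : ℝ => 1 - x ^ 2) (𝓝 1) (𝓝 (1 - 1 ^ 2)) :=
      (continuous_const.sub (continuous_pow 2)).tendsto 1
    simpa using this.mono_left nhdsWithin_le_nhds
  · filter_upwards [Ioo_mem_nhdsLT (show (0 : ℝ) < 1 by norm_num)] with x hx
    simp only [Set.mem_Ioi, sub_pos]
    nlinarith [hx.1, hx.2]

theorem exists_isMaxOn_ball_add_log_one_sub_norm_sq {E : Type*} [NormedAddCommGroup E]
    [ProperSpace E] {u : E → ℝ} {M k : ℝ} (hu : ContinuousOn u (ball 0 1))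
    (hM : ∀ z ∈ ball (0 : E) 1, u z ≤ M) (hk : 0 < k) :
    ∃ z₀ ∈ ball (0 : E) 1,
      IsMaxOn (fun z => u z + k * Real.log (1 - ‖z‖ ^ 2)) (ball 0 1) z₀ := by
  obtain ⟨r, hr1, hr⟩ := mem_nhdsLT_iff_exists_Ioo_subset.1
    (tendsto_log_one_sub_sq_nhdsLT_one.eventually_le_atBot ((u 0 - M) / k))
  set ρ := max r 0
  have hsub : closedBall (0 : E) ρ ⊆ ball 0 1 := closedBall_subset_ball (max_lt hr1 one_pos)
  have hcont : ContinuousOn (fun z => u z + k * Real.log (1 - ‖z‖ ^ 2)) (closedBall 0 ρ) := by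
    refine (hu.mono hsub).add (continuousOn_const.mul (ContinuousOn.log (by fun_prop) ?_))
    intro z hz
    have : ‖z‖ < 1 := mem_ball_zero_iff.1 (hsub hz)
    nlinarith [norm_nonneg z]
  have hout : ∀ z ∈ ball (0 : E) 1 \ closedBall 0 ρ,
      u z + k * Real.log (1 - ‖z‖ ^ 2) ≤ u 0 + k * Real.log (1 - ‖(0 : E)‖ ^ 2) := by
    rintro z ⟨hz, hzρ⟩
    simp only [mem_ball_zero_iff, mem_closedBall_zero_iff, not_le] at hz hzρ
    have hlog := hr ⟨(le_max_left r 0).trans_lt hzρ, hz⟩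
    rw [Set.mem_ofPred_eq, le_div_iff₀ hk] at hlog
    rw [norm_zero, zero_pow two_ne_zero, sub_zero, Real.log_one, mul_zero, add_zero]
    linarith [hM z (mem_ball_zero_iff.2 hz)]
  obtain ⟨z₀, hz₀, hmax⟩ := (isCompact_closedBall (0 : E) ρ).exists_isMaxOn_of_le_outside
    (mem_closedBall_self (le_max_right r 0)) hcont hout
  exact ⟨z₀, hsub hz₀, hmax⟩

theorem laplacian_eq_laplacian_complexPlane (f : ℂ → ℝ) (z : ℂ) : laplacian f z = Δ f z := by
  rw [laplacian_eq_iteratedFDeriv_complexPlane]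
  rfl

/-- No bounded C² function on the disk has Laplacian bounded below by
`c/(1-|z|²)²` with `c > 0`. -/
theorem no_bounded_with_laplacian_lower_bound (c : ℝ) (hc : 0 < c) (u : ℂ → ℝ)
    (hsmooth : ContDiffOn ℝ 2 u (ball (0 : ℂ) 1))
    (hbdd : ∃ M : ℝ, ∀ z ∈ ball (0 : ℂ) 1, |u z| ≤ M)
    (hlap : ∀ z ∈ ball (0 : ℂ) 1, c / (1 - ‖z‖ ^ 2) ^ 2 ≤ laplacian u z) :
    False := by
  obtain ⟨M, hM⟩ := hbdd
  obtain ⟨z₀, hz₀, hmax⟩ := exists_isMaxOn_ball_add_log_one_sub_norm_sq hsmooth.continuousOn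
    (fun z hz => (abs_le.1 (hM z hz)).2) (by positivity : 0 < c / 8)
  have hz₀' : ‖z₀‖ < 1 := mem_ball_zero_iff.1 hz₀
  have hu := hsmooth.contDiffAt (isOpen_ball.mem_nhds hz₀)
  have hg : ContDiffAt ℝ 2 ((c / 8) • fun x : ℂ => Real.log (1 - ‖x‖ ^ 2)) z₀ :=
    (contDiffAt_log_one_sub_norm_sq hz₀').const_smul (c / 8)
  have hnonpos : Δ (u + (c / 8) • fun x : ℂ => Real.log (1 - ‖x‖ ^ 2)) z₀ ≤ 0 :=
    (hmax.isLocalMax (isOpen_ball.mem_nhds hz₀)).laplacian_nonpos (hu.add hg)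
  rw [hu.laplacian_add hg, laplacian_smul _ (contDiffAt_log_one_sub_norm_sq hz₀'),
    laplacian_log_one_sub_norm_sq_complex hz₀', ← laplacian_eq_laplacian_complexPlane,
    smul_eq_mul] at hnonpos
  have hpos : 0 < c / (1 - ‖z₀‖ ^ 2) ^ 2 := by
    have : 0 < 1 - ‖z₀‖ ^ 2 := by nlinarith [norm_nonneg z₀]
    positivity
  have hhalf : c / 8 * (-4 / (1 - ‖z₀‖ ^ 2) ^ 2) = -(c / (1 - ‖z₀‖ ^ 2) ^ 2) / 2 := by ring
  linarith [hlap z₀ hz₀]
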